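/- For any Coxeter system (W,S) with longest element w_0 (W finite) and any x, y ∈ W, if r_{x,y} ≠ 0 then x ≥ y in the Bruhat order, and each monomial v^k appearing in r_{x,y} satisfies k ≡ ℓ(x) - ℓ(y) (mod 2) and ℓ(y) - ℓ(x) ≤ k ≤ ℓ(x) - ℓ(y). -/

import Mathlib

/-!
Both statements are proved by decreasing induction on `ℓ y`, starting from `y = w₀`, where
`r x w₀ = δ_{x,w₀}`. If `y < ys`, the recursion writes `r x y` as `r (xs) (ys)` when `xs < x`, and
as `r (xs) (ys) + (v⁻¹ - v) r x (ys)` when `x < xs`; in both cases the window `|k| ≤ ℓ x - ℓ y`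
and the parity of the exponents are inherited from the terms on the right. For the Bruhat order
the only nontrivial case is `ys ≤ xs` with `x < xs`, and there the lifting property gives `y ≤ x`.

The lifting property, and the fact that `w₀` is the only element without a right ascent, come
from the permutation representation of `W` on `W × {±1}` (Björner–Brenti, §1.4): its cocycle
`inversionSign w t` is `-1` exactly when `ℓ (w t) < ℓ w`.
-/

open LaurentPolynomial

/-- The coefficient of `v^k` in a Laurent polynomial over `ℤ`. -/
noncomputable def lcoeff (p : LaurentPolynomial ℤ) (k : ℤ) : ℤ := (AddMonoidAlgebra.coeff p) k

/-- The Bruhat order on a Coxeter group: `x ≤ y` iff `y` is obtained from `x` by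
successively multiplying by reflections that increase the length. -/
inductive BruhatLE {B W : Type*} [Group W] {M : CoxeterMatrix B} (cs : CoxeterSystem M W) :
    W → W → Prop
  | refl (x : W) : BruhatLE cs x x
  | step (x y t : W) : cs.IsReflection t → cs.length x < cs.length (x * t) →
      BruhatLE cs (x * t) y → BruhatLE cs x y

def SupportWithin (p : LaurentPolynomial ℤ) (n : ℤ) : Prop :=
  ∀ k, lcoeff p k ≠ 0 → 2 ∣ k - n ∧ -n ≤ k ∧ k ≤ n

theorem lcoeff_add (p q : LaurentPolynomial ℤ) (k : ℤ) :
    lcoeff (p + q) k = lcoeff p k + lcoeff q k := rfl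

theorem lcoeff_sub (p q : LaurentPolynomial ℤ) (k : ℤ) :
    lcoeff (p - q) k = lcoeff p k - lcoeff q k := rfl

theorem lcoeff_T_mul (m : ℤ) (p : LaurentPolynomial ℤ) (k : ℤ) :
    lcoeff (T m * p) k = lcoeff p (k - m) := by
  rw [lcoeff, T, AddMonoidAlgebra.coeff_single_mul_apply, one_mul, neg_add_eq_sub, lcoeff]

theorem supportWithin_zero (n : ℤ) : SupportWithin 0 n := fun _ h => absurd rfl h

theorem supportWithin_one : SupportWithin 1 0 := by
  intro k hk
  have : k = 0 := by
    by_contra h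
    exact hk (by rw [lcoeff, ← T_zero, T_apply, if_neg (Ne.symm h)])
  omega

theorem SupportWithin.add {p q : LaurentPolynomial ℤ} {n : ℤ} (hp : SupportWithin p n)
    (hq : SupportWithin q n) : SupportWithin (p + q) n := by
  intro k hk
  by_cases h : lcoeff p k = 0
  · exact hq k (by rwa [lcoeff_add, h, zero_add] at hk)
  · exact hp k h

theorem SupportWithin.add_two {p : LaurentPolynomial ℤ} {n : ℤ} (hp : SupportWithin p n) :
    SupportWithin p (n + 2) := by
  intro k hk
  obtain ⟨h2, hlo, hhi⟩ := hp k hk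
  exact ⟨by omega, by omega, by omega⟩

theorem SupportWithin.T_neg_one_sub_T_one_mul {p : LaurentPolynomial ℤ} {n : ℤ}
    (hp : SupportWithin p (n - 1)) : SupportWithin ((T (-1) - T 1) * p) n := by
  intro k hk
  rw [sub_mul, lcoeff_sub, lcoeff_T_mul, lcoeff_T_mul, sub_neg_eq_add] at hk
  by_cases h : lcoeff p (k + 1) = 0
  · obtain ⟨h2, hlo, hhi⟩ := hp (k - 1) (by rwa [h, zero_sub, neg_ne_zero] at hk)
    exact ⟨by omega, by omega, by omega⟩
  · obtain ⟨h2, hlo, hhi⟩ := hp (k + 1) h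
    exact ⟨by omega, by omega, by omega⟩

theorem mul_mul_inv_eq_iff {G : Type*} [Group G] (g t u : G) :
    g * t * g⁻¹ = u ↔ t = g⁻¹ * u * g := by
  constructor <;> intro h
  · rw [← h]; group
  · rw [h]; group

namespace CoxeterSystem

variable {B W : Type*} [Group W] [DecidableEq W] {M : CoxeterMatrix B} (cs : CoxeterSystem M W)

local prefix:100 "s" => cs.simple
local prefix:100 "π" => cs.wordProd
local prefix:100 "ℓ" => cs.length

def simpleFlip (i : B) (t : W) : ℤˣ := if t = s i then -1 else 1

theorem simpleFlip_conj (i : B) (g t : W) :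
    cs.simpleFlip i (g * t * g⁻¹) = if t = g⁻¹ * s i * g then -1 else 1 := by
  simp only [simpleFlip, mul_mul_inv_eq_iff]

theorem simpleFlip_simple_conj (i : B) (t : W) :
    cs.simpleFlip i (s i * t * s i) = cs.simpleFlip i t := by
  simpa [simpleFlip] using cs.simpleFlip_conj i (s i) t

def simplePerm (i : B) : Equiv.Perm (W × ℤˣ) :=
  Function.Involutive.toPerm (fun p => (s i * p.1 * s i, cs.simpleFlip i p.1 * p.2)) <| by
    rintro ⟨t, ε⟩
    ext
    · simp [← mul_assoc]
    · simp only [simpleFlip_simple_conj, ← mul_assoc, Int.units_mul_self, one_mul]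

theorem simplePerm_apply (i : B) (t : W) (ε : ℤˣ) :
    cs.simplePerm i (t, ε) = (s i * t * s i, cs.simpleFlip i t * ε) := rfl

theorem simplePerm_mul_simplePerm_apply (i i' : B) (t : W) (ε : ℤˣ) :
    (cs.simplePerm i * cs.simplePerm i') (t, ε) =
      (s i * s i' * t * (s i * s i')⁻¹,
        (if t = s i' * (s i * s i') then -1 else 1) * ((if t = s i' then -1 else 1) * ε)) := by
  have flip := cs.simpleFlip_conj i (s i') t
  rw [cs.inv_simple, mul_assoc (s i') (s i) (s i')] at flip
  rw [Equiv.Perm.mul_apply, simplePerm_apply, simplePerm_apply, flip, simpleFlip, mul_inv_rev,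
    cs.inv_simple, cs.inv_simple]
  ext
  · simp only [mul_assoc]
  · rfl

theorem simplePerm_mul_simplePerm_pow_apply (i i' : B) (k : ℕ) (t : W) (ε : ℤˣ) :
    ((cs.simplePerm i * cs.simplePerm i') ^ k) (t, ε) =
      ((s i * s i') ^ k * t * ((s i * s i') ^ k)⁻¹,
        (∏ n ∈ Finset.range (2 * k), if t = s i' * (s i * s i') ^ n then -1 else 1) * ε) := by
  induction k generalizing t ε with
  | zero => simp
  | succ k ih =>
    rw [pow_succ, Equiv.Perm.mul_apply, simplePerm_mul_simplePerm_apply, ih]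
    set c := s i * s i'
    have hc : c⁻¹ * s i' = s i' * c := by simp [c, mul_inv_rev, cs.inv_simple, mul_assoc]
    have shift (n : ℕ) : c * t * c⁻¹ = s i' * c ^ n ↔ t = s i' * c ^ (n + 2) := by
      rw [mul_mul_inv_eq_iff, ← mul_assoc c⁻¹, hc]
      group
    ext
    · simp only [pow_succ, mul_inv_rev, mul_assoc]
    · simp only [shift]
      simp only [show 2 * (k + 1) = 2 * k + 1 + 1 by ring, Finset.prod_range_succ',
        pow_zero, zero_add, pow_one, mul_one, mul_assoc]

theorem isLiftable_simplePerm : M.IsLiftable cs.simplePerm := by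
  intro i i'
  ext ⟨t, ε⟩ : 1
  -- `(s i * s i') ^ M i i' = 1`, so the factors repeat with period `M i i'` and cancel in pairs.
  have hsign : (∏ n ∈ Finset.range (2 * M i i'),
      if t = s i' * (s i * s i') ^ n then (-1 : ℤˣ) else 1) = 1 := by
    simp only [two_mul, Finset.prod_range_add, pow_add, cs.simple_mul_simple_pow, one_mul,
      Int.units_mul_self]
  rw [simplePerm_mul_simplePerm_pow_apply, cs.simple_mul_simple_pow, hsign]
  simp

noncomputable def signRep : W →* Equiv.Perm (W × ℤˣ) :=
  cs.lift ⟨cs.simplePerm, cs.isLiftable_simplePerm⟩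

theorem signRep_simple (i : B) : cs.signRep (s i) = cs.simplePerm i :=
  cs.lift_apply_simple cs.isLiftable_simplePerm i

noncomputable def inversionSign (w t : W) : ℤˣ := (cs.signRep w (t, 1)).2

theorem signRep_apply (w t : W) (ε : ℤˣ) :
    cs.signRep w (t, ε) = (w * t * w⁻¹, cs.inversionSign w t * ε) := by
  induction w using cs.simple_induction_left generalizing t ε with
  | one => simp [inversionSign]
  | mul_simple_left w i ih =>
    have hε (ε : ℤˣ) : cs.signRep (s i * w) (t, ε) = (s i * w * t * (s i * w)⁻¹,
        cs.simpleFlip i (w * t * w⁻¹) * cs.inversionSign w t * ε) := by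
      rw [map_mul, Equiv.Perm.mul_apply, ih, signRep_simple, simplePerm_apply, mul_inv_rev,
        cs.inv_simple, mul_assoc]
      ext <;> simp only [mul_assoc]
    rw [hε, show cs.inversionSign (s i * w) t = _ from congrArg Prod.snd (hε 1), mul_one]

theorem inversionSign_mul (w₁ w₂ t : W) : cs.inversionSign (w₁ * w₂) t =
    cs.inversionSign w₂ t * cs.inversionSign w₁ (w₂ * t * w₂⁻¹) := by
  have h : cs.signRep (w₁ * w₂) (t, 1) = cs.signRep w₁ (cs.signRep w₂ (t, 1)) := by
    rw [map_mul, Equiv.Perm.mul_apply]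
  rw [signRep_apply, signRep_apply, signRep_apply] at h
  simpa [mul_comm] using congrArg Prod.snd h

theorem inversionSign_one (t : W) : cs.inversionSign 1 t = 1 := by
  simp [inversionSign]

theorem inversionSign_simple (i : B) (t : W) : cs.inversionSign (s i) t = cs.simpleFlip i t := by
  rw [inversionSign, signRep_simple, simplePerm_apply, mul_one]

theorem inversionSign_wordProd (ω : List B) (t : W) : cs.inversionSign (π ω) t =
    ((cs.rightInvSeq ω).map fun u => if u = t then -1 else 1).prod := by
  induction ω with
  | nil => simp [inversionSign_one]
  | cons i ω ih =>
    rw [cs.wordProd_cons, inversionSign_mul, ih, inversionSign_simple, simpleFlip, rightInvSeq,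
      List.map_cons, List.prod_cons, mul_comm]
    congr 1
    simp only [mul_mul_inv_eq_iff, eq_comm (a := t)]

theorem inversionSign_self {t : W} (ht : cs.IsReflection t) : cs.inversionSign t t = -1 := by
  obtain ⟨w, j, rfl⟩ := ht
  set t := w * s j * w⁻¹
  have hconj : w⁻¹ * t * w⁻¹⁻¹ = s j := by simp only [t]; group
  have h₁ := cs.inversionSign_mul w w⁻¹ t
  have h₂ := cs.inversionSign_mul (w * s j) w⁻¹ t
  have h₃ := cs.inversionSign_mul w (s j) (s j)
  rw [hconj] at h₁ h₂
  rw [mul_inv_cancel, inversionSign_one] at h₁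
  rw [mul_inv_cancel_right, inversionSign_simple, simpleFlip, if_pos rfl] at h₃
  rw [h₂, h₃, neg_one_mul, mul_neg, ← h₁]

theorem inversionSign_mul_self {t : W} (ht : cs.IsReflection t) (w : W) :
    cs.inversionSign (w * t) t = -cs.inversionSign w t := by
  rw [inversionSign_mul, inversionSign_self cs ht, ht.inv, mul_assoc, ht.mul_self, mul_one,
    neg_one_mul]

theorem inversionSign_eq_one_of_length_lt {t : W} {w : W} (h : ℓ w < ℓ (w * t)) :
    cs.inversionSign w t = 1 := by
  obtain ⟨ω, hω, rfl⟩ := cs.exists_isReduced w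
  rw [inversionSign_wordProd]
  refine List.prod_eq_one fun x hx => ?_
  obtain ⟨u, hu, rfl⟩ := List.mem_map.mp hx
  have := (cs.isRightInversion_of_mem_rightInvSeq hω hu).2
  rw [if_neg]
  rintro rfl
  omega

theorem inversionSign_eq_one_iff {t : W} (ht : cs.IsReflection t) (w : W) :
    cs.inversionSign w t = 1 ↔ ℓ w < ℓ (w * t) := by
  refine ⟨fun h => ?_, cs.inversionSign_eq_one_of_length_lt⟩
  by_contra hlt
  have hdesc : ℓ (w * t) < ℓ (w * t * t) := by
    rw [mul_assoc, ht.mul_self, mul_one]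
    exact lt_of_le_of_ne (not_lt.mp hlt) (ht.length_mul_left_ne w)
  have := cs.inversionSign_mul_self ht (w * t)
  rw [mul_assoc, ht.mul_self, mul_one, h, cs.inversionSign_eq_one_of_length_lt hdesc] at this
  exact absurd this (by decide)

theorem inversionSign_eq_neg_one_iff {t : W} (ht : cs.IsReflection t) (w : W) :
    cs.inversionSign w t = -1 ↔ ℓ (w * t) < ℓ w := by
  rw [← Int.units_ne_iff_eq_neg, Ne, inversionSign_eq_one_iff cs ht, not_lt]
  exact (ht.length_mul_left_ne w).le_iff_lt

theorem length_simple_mul_lt_simple_mul_mul {t x : W} (ht : cs.IsReflection t) (i : B)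
    (hne : x * t * x⁻¹ ≠ s i) (h : ℓ x < ℓ (x * t)) : ℓ (s i * x) < ℓ (s i * x * t) := by
  rw [← cs.inversionSign_eq_one_iff ht, inversionSign_mul, inversionSign_simple, simpleFlip,
    if_neg hne, (cs.inversionSign_eq_one_iff ht x).mpr h, mul_one]

end CoxeterSystem

namespace BruhatLE

open CoxeterSystem

variable {B W : Type*} [Group W] {M : CoxeterMatrix B} {cs : CoxeterSystem M W}

local prefix:100 "s" => cs.simple
local prefix:100 "ℓ" => cs.length

theorem trans {u v w : W} (h₁ : BruhatLE cs u v) (h₂ : BruhatLE cs v w) : BruhatLE cs u w := by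
  induction h₁ with
  | refl => exact h₂
  | step x _ t ht hlt _ ih => exact .step x w t ht hlt (ih h₂)

theorem mul_of_length_lt {w t : W} (ht : cs.IsReflection t) (h : ℓ w < ℓ (w * t)) :
    BruhatLE cs w (w * t) :=
  .step w _ t ht h (.refl _)

theorem simple_mul_of_length_lt {w : W} {i : B} (h : ℓ w < ℓ (s i * w)) :
    BruhatLE cs w (s i * w) := by
  have hw : w * (w⁻¹ * s i * w) = s i * w := by group
  have ht : cs.IsReflection (w⁻¹ * s i * w) := by
    simpa using (cs.isReflection_simple i).conj w⁻¹
  exact hw ▸ mul_of_length_lt ht (hw ▸ h)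

theorem simple_mul_le_of_length_lt {w : W} {i : B} (h : ℓ (s i * w) < ℓ w) :
    BruhatLE cs (s i * w) w := by
  have := simple_mul_of_length_lt (cs := cs) (i := i) (w := s i * w)
    (by rwa [simple_mul_simple_cancel_left])
  rwa [simple_mul_simple_cancel_left] at this

theorem inv {u v : W} (h : BruhatLE cs u v) : BruhatLE cs u⁻¹ v⁻¹ := by
  induction h with
  | refl => exact .refl _
  | step x y t ht hlt _ ih =>
    have hx : x⁻¹ * (x * t * x⁻¹) = (x * t)⁻¹ := by rw [mul_inv_rev, ht.inv]; group
    refine .step x⁻¹ y⁻¹ _ (ht.conj x) ?_ (hx ▸ ih)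
    rwa [hx, cs.length_inv, cs.length_inv]

theorem simple_mul_le_mul {x t : W} (ht : cs.IsReflection t) (i : B) (hxt : ℓ x < ℓ (x * t))
    (hsxt : ℓ (s i * (x * t)) < ℓ (x * t)) : BruhatLE cs (s i * x) (x * t) := by
  classical
  by_cases hne : x * t * x⁻¹ = s i
  · rw [show s i * x = x * t by rw [← hne]; group]
    exact .refl _
  · refine .step _ _ t ht (cs.length_simple_mul_lt_simple_mul_mul ht i hne hxt) ?_
    rw [mul_assoc]
    exact simple_mul_le_of_length_lt hsxt

theorem le_simple_mul_mul {x t : W} (ht : cs.IsReflection t) (i : B) (hxt : ℓ x < ℓ (x * t))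
    (hsx : ℓ x < ℓ (s i * x)) : BruhatLE cs x (s i * (x * t)) := by
  classical
  by_cases hne : x * t * x⁻¹ = s i
  · rw [show s i * (x * t) = x by
      rw [← hne, mul_assoc, inv_mul_cancel_left, mul_assoc, ht.mul_self, mul_one]]
    exact .refl _
  · refine (simple_mul_of_length_lt hsx).trans ?_
    rw [← mul_assoc]
    exact mul_of_length_lt ht (cs.length_simple_mul_lt_simple_mul_mul ht i hne hxt)

-- The lifting property (Björner–Brenti, Prop. 2.2.7).
theorem simple_mul_lift {u v : W} (h : BruhatLE cs u v) {i : B} (hv : ℓ (s i * v) < ℓ v) :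
    (ℓ u < ℓ (s i * u) → BruhatLE cs (s i * u) v ∧ BruhatLE cs u (s i * v)) ∧
    (ℓ (s i * u) < ℓ u → BruhatLE cs (s i * u) (s i * v)) := by
  induction h with
  | refl => exact ⟨fun hu => absurd (hu.trans hv) (lt_irrefl _), fun _ => .refl _⟩
  | step x y t ht hlt hxy ih =>
    specialize ih hv
    have hx := cs.length_simple_mul x i
    have hx' := cs.length_simple_mul (x * t) i
    have e : s i * x * t = s i * (x * t) := mul_assoc _ _ _
    rcases lt_or_gt_of_ne (cs.length_simple_mul_ne (x * t) i) with hd | ha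
    · refine ⟨fun hu => ⟨(simple_mul_le_mul ht i hlt hd).trans hxy,
        (le_simple_mul_mul ht i hlt hu).trans (ih.2 hd)⟩, fun hu => ?_⟩
      exact .step _ _ t ht (by rw [e]; omega) (e ▸ ih.2 hd)
    · obtain ⟨h₁, h₂⟩ := ih.1 ha
      refine ⟨fun hu => ⟨.step _ _ t ht (by rw [e]; omega) (e ▸ h₁), .step x _ t ht hlt h₂⟩,
        fun hu => ?_⟩
      exact (simple_mul_le_of_length_lt hu).trans (.step x _ t ht hlt h₂)

theorem mul_simple {u v : W} (h : BruhatLE cs u v) {i : B}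
    (hu : ℓ (u * s i) < ℓ u) (hv : ℓ (v * s i) < ℓ v) : BruhatLE cs (u * s i) (v * s i) := by
  have hinv (w : W) : s i * w⁻¹ = (w * s i)⁻¹ := by rw [mul_inv_rev, cs.inv_simple]
  have key := (simple_mul_lift h.inv (by rwa [hinv, cs.length_inv, cs.length_inv])).2
    (by rwa [hinv, cs.length_inv, cs.length_inv])
  rw [hinv, hinv] at key
  simpa only [inv_inv] using key.inv

end BruhatLE

namespace CoxeterSystem

variable {B W : Type*} [Group W] {M : CoxeterMatrix B} (cs : CoxeterSystem M W)

local prefix:100 "s" => cs.simple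
local prefix:100 "ℓ" => cs.length

theorem eq_of_forall_length_mul_simple_lt {w₀ y : W} (hw₀ : ∀ w, ℓ w ≤ ℓ w₀)
    (hy : ∀ i, ℓ (y * s i) < ℓ y) : y = w₀ := by
  classical
  by_contra hne
  set u := y⁻¹ * w₀
  obtain ⟨i, hi⟩ := cs.exists_leftDescent_of_ne_one (w := u) (mt inv_mul_eq_one.mp hne)
  set t := u⁻¹ * s i * u
  have ht : cs.IsReflection t := by simpa [t] using (cs.isReflection_simple i).conj u⁻¹
  have hcocycle := cs.inversionSign_mul y u t
  rw [show y * u = w₀ by simp [u], show u * t * u⁻¹ = s i by simp [t, mul_assoc],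
    (cs.inversionSign_eq_neg_one_iff ht w₀).mpr
      (lt_of_le_of_ne (hw₀ _) (ht.length_mul_left_ne w₀)),
    (cs.inversionSign_eq_neg_one_iff (cs.isReflection_simple i) y).mpr (hy i)] at hcocycle
  have hasc := (cs.inversionSign_eq_one_iff ht u).mp (by simpa using hcocycle.symm)
  rw [show u * t = s i * u by simp [t, ← mul_assoc]] at hasc
  exact absurd hi hasc.not_gt

theorem exists_length_lt_mul_simple {w₀ y : W} (hw₀ : ∀ w, ℓ w ≤ ℓ w₀) (hy : y ≠ w₀) :
    ∃ i, ℓ y < ℓ (y * s i) := by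
  by_contra! h
  exact hy (cs.eq_of_forall_length_mul_simple_lt hw₀ fun i =>
    lt_of_le_of_ne (h i) (cs.length_mul_simple_ne y i))

theorem induction_from_longest {w₀ : W} (hw₀ : ∀ w, ℓ w ≤ ℓ w₀) {P : W → Prop} (longest : P w₀)
    (mul_simple : ∀ y i, ℓ y < ℓ (y * s i) → P (y * s i) → P y) (y : W) : P y := by
  induction hn : ℓ w₀ - ℓ y using Nat.strong_induction_on generalizing y with
  | _ n ih =>
    by_cases hy : y = w₀
    · exact hy ▸ longest
    · obtain ⟨i, hi⟩ := cs.exists_length_lt_mul_simple hw₀ hy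
      have := hw₀ (y * s i)
      exact mul_simple y i hi (ih _ (by omega) _ rfl)

def SatisfiesRRecursion (r : W → W → LaurentPolynomial ℤ) : Prop :=
  ∀ (x y : W) (i : B), ℓ (y * s i) < ℓ y →
    (ℓ (x * s i) < ℓ x → r x (y * s i) = r (x * s i) y) ∧
    (ℓ x < ℓ (x * s i) → r x (y * s i) = r (x * s i) y + (T (-1) - T 1) * r x y)

variable {cs} {r : W → W → LaurentPolynomial ℤ}

theorem SatisfiesRRecursion.eq_of_length_lt_mul_simple (hrec : cs.SatisfiesRRecursion r)
    {x y : W} {i : B} (hy : ℓ y < ℓ (y * s i)) :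
    (ℓ (x * s i) < ℓ x → r x y = r (x * s i) (y * s i)) ∧
    (ℓ x < ℓ (x * s i) → r x y = r (x * s i) (y * s i) + (T (-1) - T 1) * r x (y * s i)) := by
  simpa only [simple_mul_simple_cancel_right] using
    hrec x (y * s i) i (by rwa [simple_mul_simple_cancel_right])

theorem bruhatLE_of_rPoly_ne_zero [DecidableEq W] {w₀ : W} (hw₀ : ∀ w, ℓ w ≤ ℓ w₀)
    (hbase : ∀ x, r x w₀ = if x = w₀ then 1 else 0) (hrec : cs.SatisfiesRRecursion r)
    (x y : W) (h : r x y ≠ 0) : BruhatLE cs y x := by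
  refine cs.induction_from_longest hw₀ (P := fun y => ∀ x, r x y ≠ 0 → BruhatLE cs y x)
    (fun x h => ?_) (fun y i hy ih x h => ?_) y x h
  · rw [hbase] at h
    split_ifs at h with hx
    · exact hx ▸ .refl _
    · exact absurd rfl h
  have hys : BruhatLE cs y (y * s i) := .mul_of_length_lt (cs.isReflection_simple i) hy
  obtain ⟨hdesc, hasc⟩ := hrec.eq_of_length_lt_mul_simple (x := x) hy
  rcases lt_or_gt_of_ne (cs.length_mul_simple_ne x i) with hx | hx
  · have hxs : BruhatLE cs (x * s i) x := by
      simpa using BruhatLE.mul_of_length_lt (cs.isReflection_simple i) (w := x * s i)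
        (by simpa using hx)
    exact hys.trans ((ih _ (hdesc hx ▸ h)).trans hxs)
  · rw [hasc hx] at h
    by_cases h' : r x (y * s i) = 0
    · rw [h', mul_zero, add_zero] at h
      simpa using (ih _ h).mul_simple (i := i) (by simpa) (by simpa)
    · exact hys.trans (ih x h')

theorem supportWithin_rPoly [DecidableEq W] {w₀ : W} (hw₀ : ∀ w, ℓ w ≤ ℓ w₀)
    (hbase : ∀ x, r x w₀ = if x = w₀ then 1 else 0) (hrec : cs.SatisfiesRRecursion r)
    (x y : W) : SupportWithin (r x y) (ℓ x - ℓ y) := by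
  refine cs.induction_from_longest hw₀ (P := fun y => ∀ x, SupportWithin (r x y) (ℓ x - ℓ y))
    (fun x => ?_) (fun y i hy ih x => ?_) y x
  · rw [hbase]
    split_ifs with hx
    · simpa [hx] using supportWithin_one
    · exact supportWithin_zero _
  have hys : ℓ (y * s i) = ℓ y + 1 := by have := cs.length_mul_simple y i; omega
  obtain ⟨hdesc, hasc⟩ := hrec.eq_of_length_lt_mul_simple (x := x) hy
  rcases lt_or_gt_of_ne (cs.length_mul_simple_ne x i) with hx | hx
  · have hxs : ℓ (x * s i) + 1 = ℓ x := by have := cs.length_mul_simple x i; omega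
    rw [hdesc hx]
    convert (ih (x * s i)).add_two using 1
    omega
  · have hxs : ℓ (x * s i) = ℓ x + 1 := by have := cs.length_mul_simple x i; omega
    rw [hasc hx]
    refine .add (by convert ih (x * s i) using 1; omega) (.T_neg_one_sub_T_one_mul ?_)
    convert ih x using 1
    omega

end CoxeterSystem

theorem R_polynomial_support_and_degree_bounds_general
    {B W : Type*} [Group W] [DecidableEq W] {M : CoxeterMatrix B} (cs : CoxeterSystem M W)
    (w₀ : W) (hw₀ : ∀ x : W, cs.length x ≤ cs.length w₀)
    (r : W → W → LaurentPolynomial ℤ)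
    (hbase : ∀ x : W, r x w₀ = if x = w₀ then 1 else 0)
    (hrec : ∀ (x y : W) (i : B), cs.length (y * cs.simple i) < cs.length y →
      (cs.length (x * cs.simple i) < cs.length x →
        r x (y * cs.simple i) = r (x * cs.simple i) y) ∧
      (cs.length x < cs.length (x * cs.simple i) →
        r x (y * cs.simple i) = r (x * cs.simple i) y + (T (-1) - T 1) * r x y))
    (x y : W) :
    (r x y ≠ 0 → BruhatLE cs y x) ∧
    (∀ k : ℤ, lcoeff (r x y) k ≠ 0 →
      (2 : ℤ) ∣ (k - ((cs.length x : ℤ) - (cs.length y : ℤ))) ∧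
      (cs.length y : ℤ) - (cs.length x : ℤ) ≤ k ∧
      k ≤ (cs.length x : ℤ) - (cs.length y : ℤ)) := by
  refine ⟨cs.bruhatLE_of_rPoly_ne_zero hw₀ hbase hrec x y, fun k hk => ?_⟩
  obtain ⟨hparity, hlower, hupper⟩ := cs.supportWithin_rPoly hw₀ hbase hrec x y k hk
  exact ⟨hparity, by omega, hupper⟩

/-- For a finite Coxeter system with longest element `w₀` and `R`-polynomials defined by
`r x w₀ = δ_{x,w₀}` and the recursion, if `r x y ≠ 0` then `x ≥ y` in the Bruhat order,
and every monomial `v^k` appearing in `r x y` satisfies `k ≡ ℓ(x) - ℓ(y) (mod 2)` and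
`ℓ(y) - ℓ(x) ≤ k ≤ ℓ(x) - ℓ(y)`. -/
theorem R_polynomial_support_and_degree_bounds
    {B W : Type*} [Group W] [DecidableEq W] {M : CoxeterMatrix B} (cs : CoxeterSystem M W) [Finite W]
    (w₀ : W) (hw₀ : ∀ x : W, cs.length x ≤ cs.length w₀)
    (r : W → W → LaurentPolynomial ℤ)
    (hbase : ∀ x : W, r x w₀ = if x = w₀ then 1 else 0)
    (hrec : ∀ (x y : W) (i : B), cs.length (y * cs.simple i) < cs.length y →
      (cs.length (x * cs.simple i) < cs.length x →
        r x (y * cs.simple i) = r (x * cs.simple i) y) ∧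
      (cs.length x < cs.length (x * cs.simple i) →
        r x (y * cs.simple i) = r (x * cs.simple i) y + (T (-1) - T 1) * r x y))
    (x y : W) :
    (r x y ≠ 0 → BruhatLE cs y x) ∧
    (∀ k : ℤ, lcoeff (r x y) k ≠ 0 →
      (2 : ℤ) ∣ (k - ((cs.length x : ℤ) - (cs.length y : ℤ))) ∧
      (cs.length y : ℤ) - (cs.length x : ℤ) ≤ k ∧
      k ≤ (cs.length x : ℤ) - (cs.length y : ℤ)) :=
  R_polynomial_support_and_degree_bounds_general cs w₀ hw₀ r hbase hrec x y
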